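/- Fix β ∈ (1,2) and let α₁, α₂ ∈ (0,2−β) be such that T_{β,α₁} and T_{β,α₂} both have matching. If I(β,α₁) ≠ I(β,α₂), then the closures in ℝ of I(β,α₁) and I(β,α₂) are disjoint. -/

import Mathlib

noncomputable section

/-- The upper intermediate β-transformation `T⁺_{β,α}` on `[0,1]`. -/
def Tpos (β α : ℝ) (x : ℝ) : ℝ :=
  if x = (1 - α) / β then 0 else Int.fract (β * x + α)

/-- The lower intermediate β-transformation `T⁻_{β,α}` on `[0,1]`. -/
def Tneg (β α : ℝ) (x : ℝ) : ℝ :=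
  if x = (1 - α) / β then 1 else Int.fract (β * x + α)

/-- The itinerary `τ⁺_{β,α}(x)`: index `n` (from 0) is the `(n+1)`-st entry;
entry is `false` (i.e. 0) iff the `n`-th iterate is `< c`. -/
def tauPos (β α x : ℝ) : ℕ → Bool :=
  fun n => if (Tpos β α)^[n] x < (1 - α) / β then false else true

/-- The itinerary `τ⁻_{β,α}(x)`: entry is `false` (i.e. 0) iff the iterate is `≤ c`. -/
def tauNeg (β α x : ℝ) : ℕ → Bool :=
  fun n => if (Tneg β α)^[n] x ≤ (1 - α) / β then false else true

/-- The kneading invariant `k₊` of `(β,α)`. -/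
def kPlus (β α : ℝ) : ℕ → Bool := tauPos β α ((1 - α) / β)

/-- The kneading invariant `k₋` of `(β,α)`. -/
def kMinus (β α : ℝ) : ℕ → Bool := tauNeg β α ((1 - α) / β)

/-- The kneading space `Ω_{β,α}`. -/
def OmegaSet (β α : ℝ) : Set (ℕ → Bool) :=
  (tauPos β α '' Set.Icc 0 1) ∪ (tauNeg β α '' Set.Icc 0 1)

/-- `Ω` is a subshift of finite type: there is a finite set of finite forbidden words
such that `Ω` is exactly the set of sequences avoiding them. -/
def IsSFT (Ω : Set (ℕ → Bool)) : Prop :=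
  ∃ F : Finset (List Bool),
    Ω = {ω | ∀ m n : ℕ, List.ofFn (fun i : Fin n => ω (m + i)) ∉ F}

/-- `T_{β,α}` has matching. -/
def HasMatching (β α : ℝ) : Prop :=
  ∃ n : ℕ, (Tpos β α)^[n] 0 = (Tneg β α)^[n] 1

/-- The matching time: the smallest `n` with `(T⁺)ⁿ(0) = (T⁻)ⁿ(1)`. -/
def matchingTime (β α : ℝ) : ℕ :=
  sInf {n : ℕ | (Tpos β α)^[n] 0 = (Tneg β α)^[n] 1}

/-- `T_{β,α}` and `T_{β,α'}` have the same matching: both have matching, with the same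
matching time `n`, and their kneading invariants agree in the first `n+1` entries. -/
def SameMatching (β α α' : ℝ) : Prop :=
  HasMatching β α ∧ HasMatching β α' ∧ matchingTime β α = matchingTime β α' ∧
    ∀ i ≤ matchingTime β α, kPlus β α i = kPlus β α' i ∧ kMinus β α i = kMinus β α' i

/-- The matching set `I(β,α)` (a subset of `(0, 2-β)`). -/
def matchInterval (β α : ℝ) : Set ℝ :=
  {α' | α' ∈ Set.Ioo (0 : ℝ) (2 - β) ∧ SameMatching β α α'}

/-- The parameter region `Δ`. -/
def DeltaSet : Set (ℝ × ℝ) :=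
  {p | p.1 ∈ Set.Ioo (1 : ℝ) 2 ∧ p.2 ∈ Set.Ioo (0 : ℝ) (2 - p.1)}

/-- A sequence in `{0,1}^ℕ` is periodic. -/
def IsPeriodicSeq (ω : ℕ → Bool) : Prop :=
  ∃ p : ℕ, 1 ≤ p ∧ ∀ n, ω (n + p) = ω n

/-- A sequence in `{0,1}^ℕ` is eventually periodic. -/
def IsEvPeriodicSeq (ω : ℕ → Bool) : Prop :=
  ∃ k : ℕ, IsPeriodicSeq (fun n => ω (n + k))

/-- Strict lexicographic order on `{0,1}^ℕ`: at the first index where they differ,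
`ω` has entry 0 and `ν` has entry 1. -/
def lexLt (ω ν : ℕ → Bool) : Prop :=
  ∃ n : ℕ, (∀ m < n, ω m = ν m) ∧ ω n = false ∧ ν n = true


open Set Filter Topology Function

/-!
Fix `β` and write `a_m = (T⁺_{β,α})^m 0`, `b_m = (T⁻_{β,α})^m 1`, `c = (1 - α)/β`. While their
digits do not change, `a_m` and `b_m` are affine in `α` with slope `∑_{i<m} β^i`, and `c`
decreases. Hence the digits are monotone in `α`, `I(β,α)` is determined by the first `n` digits
(`n` the matching time), and `I(β,α)` is an interval.

Suppose `I(β,α)` accumulates at `t` from the right. The `T⁺`-digits of `0` are right-continuous in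
`α`, and so are the `T⁻`-digits of `1` up to the first `j` with `b_j(t) = c`. If there is no such
`j < n`, then `t ∈ I(β,α)`. Otherwise `1` is `T⁻_{β,t}`-periodic with period `p = j + 1`, `t` has
no matching before time `p`, and for `α` slightly right of `t` the orbit of `1` restarts just above
`0` at time `p` and shadows the orbit of `0`; so matching at time `n` forces `a_n(t) = a_{n-p}(t)`.
The reflection `x ↦ 1 - x`, `α ↦ 2 - β - α` conjugates `T⁺_{β,α}` to `T⁻_{β,2-β-α}` and gives the
mirror statement for accumulation from the left.

If `t` has matching, the orbit of `0` follows that of `1` into `c`, so `0` is periodic, hence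
`T⁺`-periodic with period `p`, and `a_{p-1} = b_{p-1} = c` is a matching before time `p`. So `t`
lies in every matching interval whose closure contains it. If two matching intervals accumulate at
`t` from opposite sides, `0` and `1` get a common period `d`, and `a_{d-1} = b_{d-1} = c` shows
that `t` has matching. Either way `t` lies in both intervals, so they coincide.
-/

theorem sub_eq_of_recurrence {β x y : ℝ} {u v d e : ℕ → ℝ}
    (hu : ∀ k, u (k + 1) = β * u k + x - d k) (hv : ∀ k, v (k + 1) = β * v k + y - e k)
    {m : ℕ} (hde : ∀ k < m, d k = e k) :
    v m - u m = β ^ m * (v 0 - u 0) + (∑ i ∈ Finset.range m, β ^ i) * (y - x) := by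
  induction m with
  | zero => simp
  | succ m ih =>
    rw [hu, hv, hde m m.lt_succ_self, geom_sum_succ, pow_succ]
    linear_combination β * ih fun k hk => hde k (hk.trans m.lt_succ_self)

theorem exists_iterate_eq_of_eq_off {X : Type*} {f g : X → X} {c : X}
    (hfg : ∀ y ≠ c, f y = g y) {x y : X} {N M : ℕ} (hN : f^[N] x = g^[N] y) (hNM : N ≤ M)
    (hM : g^[M] y = c) : ∃ m, f^[m] x = c := by
  obtain ⟨d, rfl⟩ := Nat.exists_eq_add_of_le hNM
  induction d generalizing N with
  | zero => exact ⟨N, hN.trans hM⟩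
  | succ d ih =>
    by_cases h : g^[N] y = c
    · exact ⟨N, hN.trans h⟩
    refine ih (N := N + 1) ?_ (by omega) (by rwa [add_right_comm])
    rw [iterate_succ_apply', iterate_succ_apply', hN, hfg _ h]

theorem eventually_imp_add_mul_sub_lt (u v κ t : ℝ) :
    ∀ᶠ x in 𝓝 t, u < v → u + κ * (x - t) < v := by
  by_cases h : u < v
  · have : Tendsto (fun x => u + κ * (x - t)) (𝓝 t) (𝓝 u) := by
      simpa using
        ((continuous_id.sub (continuous_const (y := t))).const_mul κ).const_add u |>.tendsto t
    exact (this.eventually (gt_mem_nhds h)).mono fun _ hx _ => hx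
  · exact .of_forall fun _ h' => absurd h' h

theorem Set.OrdConnected.mem_nhdsGT_of_mem_closure {X : Type*} [LinearOrder X] [TopologicalSpace X]
    [OrderTopology X] {s : Set X} (hs : s.OrdConnected) {t : X} (h : t ∈ closure (s ∩ Ioi t)) :
    s ∈ 𝓝[>] t := by
  obtain ⟨a, ha, hta⟩ := closure_nonempty_iff.1 ⟨t, h⟩
  refine mem_of_superset (Ioo_mem_nhdsGT hta) fun y hy => ?_
  obtain ⟨z, hzy, hz, -⟩ := mem_closure_iff_nhds.1 h _ (Iio_mem_nhds hy.1)
  exact hs.out hz ha ⟨le_of_lt hzy, hy.2.le⟩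

theorem Set.OrdConnected.mem_nhdsLT_of_mem_closure {X : Type*} [LinearOrder X] [TopologicalSpace X]
    [OrderTopology X] {s : Set X} (hs : s.OrdConnected) {t : X} (h : t ∈ closure (s ∩ Iio t)) :
    s ∈ 𝓝[<] t :=
  hs.dual.mem_nhdsGT_of_mem_closure (X := Xᵒᵈ) h

theorem Set.OrdConnected.mem_or_mem_nhdsLT_or_mem_nhdsGT {X : Type*} [LinearOrder X]
    [TopologicalSpace X] [OrderTopology X] {s : Set X} (hs : s.OrdConnected) {t : X}
    (h : t ∈ closure s) : t ∈ s ∨ s ∈ 𝓝[<] t ∨ s ∈ 𝓝[>] t := by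
  by_cases ht : t ∈ s
  · exact .inl ht
  have : s ⊆ (s ∩ Iio t) ∪ (s ∩ Ioi t) := fun x hx =>
    (lt_or_gt_of_ne (ne_of_mem_of_not_mem hx ht)).imp (⟨hx, ·⟩) (⟨hx, ·⟩)
  rcases closure_union.subset (closure_mono this h) with h | h
  exacts [.inr (.inl (hs.mem_nhdsLT_of_mem_closure h)),
    .inr (.inr (hs.mem_nhdsGT_of_mem_closure h))]

section Dynamics

variable {β α x : ℝ}

theorem eq_crit_iff (hβ : 0 < β) : x = (1 - α) / β ↔ β * x + α = 1 := by
  rw [eq_div_iff hβ.ne']; constructor <;> intro h <;> linarith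

theorem Tpos_eq (hβ : 0 < β) (hα : α ∈ Icc 0 (2 - β)) (hx : x ∈ Ico 0 1) :
    Tpos β α x = β * x + α - if β * x + α < 1 then 0 else 1 := by
  obtain ⟨hx0, hx1⟩ := hx
  unfold Tpos
  split_ifs with hc h h
  · linarith [(eq_crit_iff hβ).1 hc]
  · linarith [(eq_crit_iff hβ).1 hc]
  · rw [Int.fract_eq_iff]; exact ⟨by nlinarith [hα.1], by linarith, 0, by simp⟩
  · have : β * x + α ≠ 1 := fun h' => hc ((eq_crit_iff hβ).2 h')
    rw [Int.fract_eq_iff]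
    exact ⟨by linarith [not_lt.1 h], by nlinarith [hα.2], 1, by simp⟩

theorem Tneg_eq (hβ : 0 < β) (hα : α ∈ Ico 0 (2 - β)) (hx : x ∈ Ioc 0 1) :
    Tneg β α x = β * x + α - if β * x + α ≤ 1 then 0 else 1 := by
  obtain ⟨hx0, hx1⟩ := hx
  unfold Tneg
  split_ifs with hc h h
  · linarith [(eq_crit_iff hβ).1 hc]
  · linarith [(eq_crit_iff hβ).1 hc]
  · have : β * x + α ≠ 1 := fun h' => hc ((eq_crit_iff hβ).2 h')
    rw [Int.fract_eq_iff]
    exact ⟨by nlinarith [hα.1], by linarith [lt_of_le_of_ne h this], 0, by simp⟩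
  · rw [Int.fract_eq_iff]; exact ⟨by linarith, by nlinarith [hα.2], 1, by simp⟩

theorem Tpos_eq_Tneg {x : ℝ} (hx : x ≠ (1 - α) / β) : Tpos β α x = Tneg β α x := by
  simp only [Tpos, Tneg, if_neg hx]

end Dynamics

def orbitZero (β α : ℝ) (m : ℕ) : ℝ := (Tpos β α)^[m] 0

def orbitOne (β α : ℝ) (m : ℕ) : ℝ := (Tneg β α)^[m] 1

-- The entries `k₊(m + 1)` and `k₋(m + 1)` of the kneading invariants (`kPlus_succ`), as reals.
def zeroDigit (β α : ℝ) (m : ℕ) : ℝ := if β * orbitZero β α m + α < 1 then 0 else 1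

def oneDigit (β α : ℝ) (m : ℕ) : ℝ := if β * orbitOne β α m + α ≤ 1 then 0 else 1

def DigitsAgree (β α α' : ℝ) (n : ℕ) : Prop :=
  ∀ k < n, zeroDigit β α k = zeroDigit β α' k ∧ oneDigit β α k = oneDigit β α' k

section Orbits

variable {β α : ℝ}

@[simp] theorem orbitZero_zero : orbitZero β α 0 = 0 := rfl

@[simp] theorem orbitOne_zero : orbitOne β α 0 = 1 := rfl

theorem orbitZero_add_one (m : ℕ) : orbitZero β α (m + 1) = Tpos β α (orbitZero β α m) :=
  iterate_succ_apply' _ _ _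

theorem orbitOne_add_one (m : ℕ) : orbitOne β α (m + 1) = Tneg β α (orbitOne β α m) :=
  iterate_succ_apply' _ _ _

theorem orbitZero_mem (m : ℕ) : orbitZero β α m ∈ Ico 0 1 := by
  cases m with
  | zero => simp
  | succ m =>
    rw [orbitZero_add_one, Tpos]
    split_ifs
    · simp
    · exact ⟨Int.fract_nonneg _, Int.fract_lt_one _⟩

theorem orbitZero_succ (hβ : 0 < β) (hα : α ∈ Icc 0 (2 - β)) (m : ℕ) :
    orbitZero β α (m + 1) = β * orbitZero β α m + α - zeroDigit β α m := by
  rw [orbitZero_add_one, Tpos_eq hβ hα (orbitZero_mem m), zeroDigit]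

theorem orbitOne_mem (hβ : 0 < β) (hα : α ∈ Ico 0 (2 - β)) (m : ℕ) : orbitOne β α m ∈ Ioc 0 1 := by
  induction m with
  | zero => simp
  | succ m ih =>
    obtain ⟨hb0, hb1⟩ := ih
    rw [orbitOne_add_one, Tneg_eq hβ hα ⟨hb0, hb1⟩]
    split_ifs with h
    · exact ⟨by nlinarith [hα.1], by linarith⟩
    · exact ⟨by linarith, by nlinarith [hα.2]⟩

theorem orbitOne_succ (hβ : 0 < β) (hα : α ∈ Ico 0 (2 - β)) (m : ℕ) :
    orbitOne β α (m + 1) = β * orbitOne β α m + α - oneDigit β α m := by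
  rw [orbitOne_add_one, Tneg_eq hβ hα (orbitOne_mem hβ hα m), oneDigit]

end Orbits

section Affine

variable {β α α' t x y z : ℝ} {m n : ℕ}

theorem orbitZero_sub_orbitZero (hβ : 0 < β) (ht : t ∈ Ico 0 (2 - β)) (hx : x ∈ Ico 0 (2 - β))
    (h : ∀ k < m, zeroDigit β t k = zeroDigit β x k) :
    orbitZero β x m - orbitZero β t m = (∑ i ∈ Finset.range m, β ^ i) * (x - t) := by
  simpa using sub_eq_of_recurrence (orbitZero_succ hβ (Ico_subset_Icc_self ht))
    (orbitZero_succ hβ (Ico_subset_Icc_self hx)) h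

theorem orbitOne_sub_orbitOne (hβ : 0 < β) (ht : t ∈ Ico 0 (2 - β)) (hx : x ∈ Ico 0 (2 - β))
    (h : ∀ k < m, oneDigit β t k = oneDigit β x k) :
    orbitOne β x m - orbitOne β t m = (∑ i ∈ Finset.range m, β ^ i) * (x - t) := by
  simpa using sub_eq_of_recurrence (orbitOne_succ hβ ht) (orbitOne_succ hβ hx) h

theorem mul_orbitZero_add_eq (hβ : 0 < β) (ht : t ∈ Ico 0 (2 - β)) (hx : x ∈ Ico 0 (2 - β))
    (h : ∀ k < m, zeroDigit β t k = zeroDigit β x k) :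
    β * orbitZero β x m + x =
      β * orbitZero β t m + t + (∑ i ∈ Finset.range (m + 1), β ^ i) * (x - t) := by
  rw [geom_sum_succ]; linear_combination β * orbitZero_sub_orbitZero hβ ht hx h

theorem mul_orbitOne_add_eq (hβ : 0 < β) (ht : t ∈ Ico 0 (2 - β)) (hx : x ∈ Ico 0 (2 - β))
    (h : ∀ k < m, oneDigit β t k = oneDigit β x k) :
    β * orbitOne β x m + x =
      β * orbitOne β t m + t + (∑ i ∈ Finset.range (m + 1), β ^ i) * (x - t) := by
  rw [geom_sum_succ]; linear_combination β * orbitOne_sub_orbitOne hβ ht hx h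

theorem zeroDigit_mono (hβ : 0 < β) (ht : t ∈ Ico 0 (2 - β)) (hx : x ∈ Ico 0 (2 - β)) (htx : t ≤ x)
    (h : ∀ k < m, zeroDigit β t k = zeroDigit β x k) : zeroDigit β t m ≤ zeroDigit β x m := by
  have := mul_orbitZero_add_eq hβ ht hx h
  have : 0 ≤ (∑ i ∈ Finset.range (m + 1), β ^ i) * (x - t) :=
    mul_nonneg (geom_sum_pos hβ.le m.succ_ne_zero).le (sub_nonneg.2 htx)
  unfold zeroDigit; split_ifs <;> norm_num; linarith

theorem oneDigit_mono (hβ : 0 < β) (ht : t ∈ Ico 0 (2 - β)) (hx : x ∈ Ico 0 (2 - β)) (htx : t ≤ x)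
    (h : ∀ k < m, oneDigit β t k = oneDigit β x k) : oneDigit β t m ≤ oneDigit β x m := by
  have := mul_orbitOne_add_eq hβ ht hx h
  have : 0 ≤ (∑ i ∈ Finset.range (m + 1), β ^ i) * (x - t) :=
    mul_nonneg (geom_sum_pos hβ.le m.succ_ne_zero).le (sub_nonneg.2 htx)
  unfold oneDigit; split_ifs <;> norm_num; linarith

theorem orbitOne_sub_orbitZero_eq (hβ : 0 < β) (hα : α ∈ Ico 0 (2 - β))
    (hα' : α' ∈ Ico 0 (2 - β)) (h : DigitsAgree β α α' m) :
    orbitOne β α' m - orbitZero β α' m = orbitOne β α m - orbitZero β α m := by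
  linarith [orbitZero_sub_orbitZero hβ hα hα' fun k hk => (h k hk).1,
    orbitOne_sub_orbitOne hβ hα hα' fun k hk => (h k hk).2]

theorem DigitsAgree.mono (h : DigitsAgree β α α' n) (hmn : m ≤ n) :
    DigitsAgree β α α' m :=
  fun k hk => h k (hk.trans_le hmn)

theorem DigitsAgree.of_mem_Icc (hβ : 0 < β) (hx : x ∈ Ico 0 (2 - β))
    (hy : y ∈ Ico 0 (2 - β)) (hz : z ∈ Icc x y) (h : DigitsAgree β x y n) :
    DigitsAgree β x z n := by
  have hzI : z ∈ Ico 0 (2 - β) := ⟨hx.1.trans hz.1, hz.2.trans_lt hy.2⟩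
  induction n with
  | zero => exact fun k hk => absurd hk k.not_lt_zero
  | succ n ih =>
    have hxz := ih (h.mono n.le_succ)
    have hzy : DigitsAgree β z y n := fun j hj =>
      ⟨(hxz j hj).1.symm.trans (h j (by omega)).1, (hxz j hj).2.symm.trans (h j (by omega)).2⟩
    intro k hk
    rcases Nat.lt_succ_iff_lt_or_eq.1 hk with hk | rfl
    · exact hxz k hk
    constructor
    · refine le_antisymm (zeroDigit_mono hβ hx hzI hz.1 fun j hj => (hxz j hj).1) ?_
      rw [(h k k.lt_succ_self).1]
      exact zeroDigit_mono hβ hzI hy hz.2 fun j hj => (hzy j hj).1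
    · refine le_antisymm (oneDigit_mono hβ hx hzI hz.1 fun j hj => (hxz j hj).2) ?_
      rw [(h k k.lt_succ_self).2]
      exact oneDigit_mono hβ hzI hy hz.2 fun j hj => (hzy j hj).2

end Affine

section Kneading

variable {β α α' : ℝ} {m : ℕ}

@[simp] theorem kPlus_zero : kPlus β α 0 = true := by simp [kPlus, tauPos]

@[simp] theorem kMinus_zero : kMinus β α 0 = false := by simp [kMinus, tauNeg]

theorem kPlus_succ (hβ : 0 < β) :
    kPlus β α (m + 1) = if β * orbitZero β α m + α < 1 then false else true := by
  have : (Tpos β α)^[m + 1] ((1 - α) / β) = orbitZero β α m := by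
    rw [iterate_succ_apply, Tpos, if_pos rfl]; rfl
  simp only [kPlus, tauPos, this, lt_div_iff₀ hβ, mul_comm β, lt_sub_iff_add_lt]

theorem kMinus_succ (hβ : 0 < β) :
    kMinus β α (m + 1) = if β * orbitOne β α m + α ≤ 1 then false else true := by
  have : (Tneg β α)^[m + 1] ((1 - α) / β) = orbitOne β α m := by
    rw [iterate_succ_apply, Tneg, if_pos rfl]; rfl
  simp only [kMinus, tauNeg, this, le_div_iff₀ hβ, mul_comm β, le_sub_iff_add_le]

theorem zeroDigit_eq_iff (hβ : 0 < β) :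
    zeroDigit β α m = zeroDigit β α' m ↔ kPlus β α (m + 1) = kPlus β α' (m + 1) := by
  rw [kPlus_succ hβ, kPlus_succ hβ, zeroDigit, zeroDigit]; split_ifs <;> simp

theorem oneDigit_eq_iff (hβ : 0 < β) :
    oneDigit β α m = oneDigit β α' m ↔ kMinus β α (m + 1) = kMinus β α' (m + 1) := by
  rw [kMinus_succ hβ, kMinus_succ hβ, oneDigit, oneDigit]; split_ifs <;> simp

end Kneading

section MatchingIntervals

variable {β α α' α'' x : ℝ} {n m : ℕ}

theorem orbitZero_matchingTime (h : HasMatching β α) :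
    orbitZero β α (matchingTime β α) = orbitOne β α (matchingTime β α) :=
  Nat.sInf_mem h

theorem orbitZero_ne_orbitOne (h : m < matchingTime β α) : orbitZero β α m ≠ orbitOne β α m :=
  Nat.notMem_of_lt_sInf h

theorem matchingTime_eq (h : orbitZero β α n = orbitOne β α n)
    (hlt : ∀ m < n, orbitZero β α m ≠ orbitOne β α m) : matchingTime β α = n :=
  le_antisymm (Nat.sInf_le h) (le_csInf ⟨n, h⟩ fun m hm => not_lt.1 fun hmn => hlt m hmn hm)

theorem SameMatching.symm (h : SameMatching β α α') : SameMatching β α' α :=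
  ⟨h.2.1, h.1, h.2.2.1.symm, fun i hi =>
    ⟨(h.2.2.2 i (h.2.2.1 ▸ hi)).1.symm, (h.2.2.2 i (h.2.2.1 ▸ hi)).2.symm⟩⟩

theorem SameMatching.trans (h : SameMatching β α α') (h' : SameMatching β α' α'') :
    SameMatching β α α'' :=
  ⟨h.1, h'.2.1, h.2.2.1.trans h'.2.2.1, fun i hi =>
    ⟨(h.2.2.2 i hi).1.trans (h'.2.2.2 i (h.2.2.1 ▸ hi)).1,
      (h.2.2.2 i hi).2.trans (h'.2.2.2 i (h.2.2.1 ▸ hi)).2⟩⟩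

theorem hasMatching_of_mem (h : α' ∈ matchInterval β α) : HasMatching β α' := h.2.2.1

theorem matchInterval_eq_of_mem (h : α' ∈ matchInterval β α) :
    matchInterval β α = matchInterval β α' := by
  ext x
  exact and_congr_right fun _ => ⟨h.2.symm.trans, h.2.trans⟩

theorem matchInterval_eq_of_mem_of_mem {α₁ α₂ : ℝ} (h₁ : x ∈ matchInterval β α₁)
    (h₂ : x ∈ matchInterval β α₂) : matchInterval β α₁ = matchInterval β α₂ :=
  (matchInterval_eq_of_mem h₁).trans (matchInterval_eq_of_mem h₂).symm

theorem mem_matchInterval_iff (hβ : 0 < β) (hα : α ∈ Ioo 0 (2 - β)) (hM : HasMatching β α)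
    (hα' : α' ∈ Ioo 0 (2 - β)) :
    α' ∈ matchInterval β α ↔ DigitsAgree β α α' (matchingTime β α) := by
  constructor
  · rintro ⟨-, -, -, -, hk⟩ m hm
    exact ⟨(zeroDigit_eq_iff hβ).2 (hk (m + 1) hm).1, (oneDigit_eq_iff hβ).2 (hk (m + 1) hm).2⟩
  · intro h
    have hsub (m) (hm : m ≤ matchingTime β α) :=
      orbitOne_sub_orbitZero_eq hβ (Ioo_subset_Ico_self hα) (Ioo_subset_Ico_self hα')
        fun k hk => h k (hk.trans_le hm)
    have hmatch : orbitZero β α' (matchingTime β α) = orbitOne β α' (matchingTime β α) := by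
      linarith [hsub _ le_rfl, orbitZero_matchingTime hM]
    have htime : matchingTime β α' = matchingTime β α := matchingTime_eq hmatch
      fun m hm heq => orbitZero_ne_orbitOne hm (by linarith [hsub m hm.le])
    refine ⟨hα', hM, ⟨_, hmatch⟩, htime.symm, fun i hi => ?_⟩
    cases i with
    | zero => simp
    | succ m => exact ⟨(zeroDigit_eq_iff hβ).1 (h m hi).1, (oneDigit_eq_iff hβ).1 (h m hi).2⟩

theorem matchInterval_ordConnected (hβ : 0 < β) : (matchInterval β α).OrdConnected := by
  refine ⟨fun x hx y hy z hz => ?_⟩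
  rw [matchInterval_eq_of_mem hx] at hy ⊢
  have hM := hasMatching_of_mem hx
  have hzI : z ∈ Ioo 0 (2 - β) := ⟨hx.1.1.trans_le hz.1, hz.2.trans_lt hy.1.2⟩
  exact (mem_matchInterval_iff hβ hx.1 hM hzI).2 <|
    ((mem_matchInterval_iff hβ hx.1 hM hy.1).1 hy).of_mem_Icc hβ (Ioo_subset_Ico_self hx.1)
      (Ioo_subset_Ico_self hy.1) hz

end MatchingIntervals

section Periodic

variable {β α : ℝ} {p k : ℕ}

theorem isPeriodicPt_zero_iff (hβ : 0 < β) (hα : α ∈ Ioo 0 (2 - β)) (m : ℕ) :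
    IsPeriodicPt (Tpos β α) (m + 1) 0 ↔ orbitZero β α m = (1 - α) / β := by
  change orbitZero β α (m + 1) = 0 ↔ _
  rw [orbitZero_succ hβ (Ioo_subset_Icc_self hα), eq_crit_iff hβ, zeroDigit]
  have := mul_nonneg hβ.le (orbitZero_mem (β := β) (α := α) m).1
  split_ifs <;> constructor <;> intro <;> linarith [hα.1]

theorem isPeriodicPt_one_iff (hβ : 0 < β) (hα : α ∈ Ico 0 (2 - β)) (m : ℕ) :
    IsPeriodicPt (Tneg β α) (m + 1) 1 ↔ orbitOne β α m = (1 - α) / β := by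
  change orbitOne β α (m + 1) = 1 ↔ _
  rw [orbitOne_succ hβ hα, eq_crit_iff hβ, oneDigit]
  have := mul_le_of_le_one_right hβ.le (orbitOne_mem hβ hα m).2
  split_ifs <;> constructor <;> intro <;> linarith [hα.2]

theorem isPeriodicPt_orbitZero_iff :
    IsPeriodicPt (Tpos β α) p (orbitZero β α k) ↔ orbitZero β α (p + k) = orbitZero β α k := by
  rw [IsPeriodicPt, IsFixedPt, orbitZero, orbitZero, iterate_add_apply]

theorem isPeriodicPt_orbitOne_iff :
    IsPeriodicPt (Tneg β α) p (orbitOne β α k) ↔ orbitOne β α (p + k) = orbitOne β α k := by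
  rw [IsPeriodicPt, IsFixedPt, orbitOne, orbitOne, iterate_add_apply]

end Periodic

section RightLimits

variable {β t x : ℝ}

theorem eventually_zeroDigit_eq (hβ : 0 < β) (ht : t ∈ Ico 0 (2 - β)) (m : ℕ) :
    ∀ᶠ x in 𝓝[>] t, ∀ k < m, zeroDigit β x k = zeroDigit β t k := by
  induction m with
  | zero => exact .of_forall fun _ k hk => absurd hk k.not_lt_zero
  | succ m ih =>
    filter_upwards [ih, Ioo_mem_nhdsGT ht.2, nhdsWithin_le_nhds (eventually_imp_add_mul_sub_lt
      (β * orbitZero β t m + t) 1 (∑ i ∈ Finset.range (m + 1), β ^ i) t)] with x hdig hx hnear k hk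
    rcases Nat.lt_succ_iff_lt_or_eq.1 hk with hk | rfl
    · exact hdig k hk
    have hlift := mul_orbitZero_add_eq hβ ht ⟨ht.1.trans hx.1.le, hx.2⟩ fun j hj => (hdig j hj).symm
    have hpos := mul_pos (geom_sum_pos hβ.le k.succ_ne_zero) (sub_pos.2 hx.1)
    unfold zeroDigit
    by_cases h : β * orbitZero β t k + t < 1
    · rw [if_pos h, if_pos (by linarith [hnear h])]
    · rw [if_neg h, if_neg (by linarith)]

theorem eventually_oneDigit_eq (hβ : 0 < β) (ht : t ∈ Ico 0 (2 - β)) {m : ℕ}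
    (hm : ∀ k < m, orbitOne β t k ≠ (1 - t) / β) :
    ∀ᶠ x in 𝓝[>] t, ∀ k < m, oneDigit β x k = oneDigit β t k := by
  induction m with
  | zero => exact .of_forall fun _ k hk => absurd hk k.not_lt_zero
  | succ m ih =>
    filter_upwards [ih fun k hk => hm k (hk.trans m.lt_succ_self), Ioo_mem_nhdsGT ht.2,
      nhdsWithin_le_nhds (eventually_imp_add_mul_sub_lt
      (β * orbitOne β t m + t) 1 (∑ i ∈ Finset.range (m + 1), β ^ i) t)] with x hdig hx hnear k hk
    have hne : β * orbitOne β t k + t ≠ 1 := fun h => hm k hk ((eq_crit_iff hβ).2 h)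
    rcases Nat.lt_succ_iff_lt_or_eq.1 hk with hk | rfl
    · exact hdig k hk
    have hlift := mul_orbitOne_add_eq hβ ht ⟨ht.1.trans hx.1.le, hx.2⟩ fun j hj => (hdig j hj).symm
    have hpos := mul_pos (geom_sum_pos hβ.le k.succ_ne_zero) (sub_pos.2 hx.1)
    unfold oneDigit
    rcases hne.lt_or_gt with h | h
    · rw [if_pos h.le, if_pos (by linarith [hnear h])]
    · rw [if_neg (not_le.2 h), if_neg (by linarith)]

theorem orbitOne_succ_of_crit (hβ : 0 < β) (ht : t ∈ Ico 0 (2 - β)) (hx : x ∈ Ico 0 (2 - β))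
    (htx : t < x) {j : ℕ} (h : ∀ k < j, oneDigit β t k = oneDigit β x k)
    (hcrit : orbitOne β t j = (1 - t) / β) :
    orbitOne β x (j + 1) = (∑ i ∈ Finset.range (j + 1), β ^ i) * (x - t) := by
  have hlift := mul_orbitOne_add_eq hβ ht hx h
  rw [(eq_crit_iff hβ).1 hcrit] at hlift
  have hpos := mul_pos (geom_sum_pos hβ.le j.succ_ne_zero) (sub_pos.2 htx)
  rw [orbitOne_succ hβ hx, oneDigit, if_neg (by linarith)]
  linarith

theorem orbitOne_add_sub_orbitZero (hβ : 0 < β) (hx : x ∈ Ico 0 (2 - β)) {p m : ℕ}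
    (h : ∀ k < m, oneDigit β x (p + k) = zeroDigit β x k) :
    orbitOne β x (p + m) - orbitZero β x m = β ^ m * orbitOne β x p := by
  simpa using sub_eq_of_recurrence (u := orbitZero β x) (v := fun i => orbitOne β x (p + i))
    (orbitZero_succ hβ (Ico_subset_Icc_self hx)) (fun i => orbitOne_succ hβ hx (p + i))
    fun k hk => (h k hk).symm

theorem eventually_oneDigit_add_eq_zeroDigit (hβ : 0 < β) (ht : t ∈ Ico 0 (2 - β)) {j : ℕ}
    (hcrit : orbitOne β t j = (1 - t) / β) (hj : ∀ k < j, orbitOne β t k ≠ (1 - t) / β)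
    (m : ℕ) : ∀ᶠ x in 𝓝[>] t, ∀ k < m, oneDigit β x (j + 1 + k) = zeroDigit β x k := by
  set S := ∑ i ∈ Finset.range (j + 1), β ^ i
  induction m with
  | zero => exact .of_forall fun _ k hk => absurd hk k.not_lt_zero
  | succ m ih =>
    filter_upwards [ih, eventually_zeroDigit_eq hβ ht m, eventually_oneDigit_eq hβ ht hj,
      Ioo_mem_nhdsGT ht.2, nhdsWithin_le_nhds (eventually_imp_add_mul_sub_lt
        (β * orbitZero β t m + t) 1 (∑ i ∈ Finset.range (m + 1), β ^ i + β ^ (m + 1) * S) t)]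
      with x hshift hzero hone hx hnear k hk
    rcases Nat.lt_succ_iff_lt_or_eq.1 hk with hk | rfl
    · exact hshift k hk
    have hxI : x ∈ Ico 0 (2 - β) := ⟨ht.1.trans hx.1.le, hx.2⟩
    have hp := orbitOne_succ_of_crit hβ ht hxI hx.1 (fun i hi => (hone i hi).symm) hcrit
    have hdiff := orbitOne_add_sub_orbitZero hβ hxI hshift
    have hlift := mul_orbitZero_add_eq hβ ht hxI fun i hi => (hzero i hi).symm
    -- after the tie at `j`, the orbit of `1` restarts at `b_{j+1}(x) > 0` and shadows that of `0`
    have hlift' : β * orbitOne β x (j + 1 + k) + x = β * orbitZero β t k + t +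
        (∑ i ∈ Finset.range (k + 1), β ^ i + β ^ (k + 1) * S) * (x - t) := by
      rw [pow_succ]; linear_combination β * hdiff + hlift + β * β ^ k * hp
    have hpos := mul_pos (geom_sum_pos hβ.le k.succ_ne_zero) (sub_pos.2 hx.1)
    have hpos' := mul_pos (mul_pos (pow_pos hβ (k + 1)) (geom_sum_pos hβ.le j.succ_ne_zero))
      (sub_pos.2 hx.1)
    unfold oneDigit zeroDigit
    by_cases h : β * orbitZero β t k + t < 1
    · have := hnear h
      rw [if_pos (by linarith), if_pos (by linarith)]
    · rw [if_neg (by linarith), if_neg (by linarith)]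

theorem orbitZero_add_eq_of_shadow (hβ : 0 < β) (ht : t ∈ Ico 0 (2 - β))
    (hx : x ∈ Ico 0 (2 - β)) (htx : t < x) {j q : ℕ} (hcrit : orbitOne β t j = (1 - t) / β)
    (hone : ∀ k < j, oneDigit β t k = oneDigit β x k)
    (hzero : ∀ k < j + 1 + q, zeroDigit β t k = zeroDigit β x k)
    (hshift : ∀ k < q, oneDigit β x (j + 1 + k) = zeroDigit β x k)
    (hmatch : orbitZero β x (j + 1 + q) = orbitOne β x (j + 1 + q)) :
    orbitZero β t (j + 1 + q) = orbitZero β t q := by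
  have hp := orbitOne_succ_of_crit hβ ht hx htx hone hcrit
  have hdiff := orbitOne_add_sub_orbitZero hβ hx hshift
  have hn := orbitZero_sub_orbitZero hβ ht hx hzero
  have hq := orbitZero_sub_orbitZero hβ ht hx fun i (hi : i < q) => hzero i (by omega)
  have hS : ∑ i ∈ Finset.range (j + 1 + q), β ^ i =
      ∑ i ∈ Finset.range q, β ^ i + β ^ q * ∑ i ∈ Finset.range (j + 1), β ^ i := by
    rw [add_comm, Finset.sum_range_add, Finset.mul_sum]; simp_rw [pow_add]
  linear_combination -hn + hq + hmatch + hdiff + β ^ q * hp - (x - t) * hS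

end RightLimits

section OneSided

variable {β α t : ℝ}

theorem mem_or_isPeriodicPt_of_mem_nhdsGT (hβ : 0 < β) (ht : t ∈ Ioo 0 (2 - β))
    (hC : matchInterval β α ∈ 𝓝[>] t) :
    t ∈ matchInterval β α ∨ ∃ p > 0, IsPeriodicPt (Tneg β t) p 1 ∧
      (∃ k, IsPeriodicPt (Tpos β t) p (orbitZero β t k)) ∧
      ∀ m < p, orbitZero β t m ≠ orbitOne β t m := by
  obtain ⟨α', hα'⟩ := Filter.nonempty_of_mem hC
  rw [matchInterval_eq_of_mem hα'] at hC ⊢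
  have hM := hasMatching_of_mem hα'
  set n := matchingTime β α'
  have htI := Ioo_subset_Ico_self ht
  have hclass : ∀ᶠ x in 𝓝[>] t, x ∈ matchInterval β α' ∧ DigitsAgree β α' x n := by
    filter_upwards [hC] with x hx using ⟨hx, (mem_matchInterval_iff hβ hα'.1 hM hx.1).1 hx⟩
  have hzero : ∀ k < n, zeroDigit β t k = zeroDigit β α' k := by
    obtain ⟨x, ⟨-, hx⟩, hxt⟩ := (hclass.and (eventually_zeroDigit_eq hβ htI n)).exists
    exact fun k hk => (hxt k hk).symm.trans (hx k hk).1.symm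
  by_cases hcrit : ∃ j, j < n ∧ orbitOne β t j = (1 - t) / β
  swap
  · push Not at hcrit
    obtain ⟨x, ⟨-, hx⟩, hxt⟩ := (hclass.and (eventually_oneDigit_eq hβ htI hcrit)).exists
    exact .inl <| (mem_matchInterval_iff hβ hα'.1 hM ht).2 fun k hk =>
      ⟨(hzero k hk).symm, (hx k hk).2.trans (hxt k hk)⟩
  classical
  set j := Nat.find hcrit
  obtain ⟨hjn, hj⟩ : j < n ∧ orbitOne β t j = (1 - t) / β := Nat.find_spec hcrit
  have hmin : ∀ k < j, orbitOne β t k ≠ (1 - t) / β := fun k hk h =>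
    Nat.find_min hcrit hk ⟨hk.trans hjn, h⟩
  obtain ⟨x, ⟨hxC, -⟩, hshift, hxzero, hxone, hxt⟩ := (hclass.and
    ((eventually_oneDigit_add_eq_zeroDigit hβ htI hj hmin (n - (j + 1))).and
    ((eventually_zeroDigit_eq hβ htI n).and
    ((eventually_oneDigit_eq hβ htI hmin).and self_mem_nhdsWithin)))).exists
  have hxI : x ∈ Ico 0 (2 - β) := Ioo_subset_Ico_self hxC.1
  have hxn : matchingTime β x = n := hxC.2.2.2.1.symm
  refine .inr ⟨j + 1, j.succ_pos, (isPeriodicPt_one_iff hβ htI j).2 hj,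
    ⟨n - (j + 1), isPeriodicPt_orbitZero_iff.2 ?_⟩, fun m hm => ?_⟩
  · have hn : j + 1 + (n - (j + 1)) = n := Nat.add_sub_cancel' hjn
    refine orbitZero_add_eq_of_shadow hβ htI hxI hxt hj (fun i hi => (hxone i hi).symm)
      (fun i hi => (hxzero i (hn ▸ hi)).symm) hshift ?_
    rw [hn, ← hxn]
    exact orbitZero_matchingTime (hasMatching_of_mem hxC)
  · have hagree : DigitsAgree β t x m := fun k hk =>
      ⟨(hxzero k (by omega)).symm, (hxone k (by omega)).symm⟩
    have := orbitOne_sub_orbitZero_eq hβ htI hxI hagree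
    exact fun h => orbitZero_ne_orbitOne (hxn ▸ (by omega : m < n)) (by linarith)

theorem zero_mem_periodicPts_of_hasMatching (hβ : 0 < β) (ht : t ∈ Ioo 0 (2 - β))
    (hM : HasMatching β t) (h : 1 ∈ periodicPts (Tneg β t)) : 0 ∈ periodicPts (Tpos β t) := by
  obtain ⟨N, hN⟩ := hM
  obtain ⟨p, hp, hper⟩ := h
  obtain ⟨m, rfl⟩ := Nat.exists_eq_add_one_of_ne_zero hp.ne'
  have hcrit := (isPeriodicPt_one_iff hβ (Ioo_subset_Ico_self ht) m).1 hper
  obtain ⟨k, hk⟩ := exists_iterate_eq_of_eq_off (fun y hy => Tpos_eq_Tneg hy) hN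
    (M := m + N * (m + 1)) (by nlinarith)
    (by rw [iterate_add_apply, (hper.const_mul N).eq]; exact hcrit)
  exact ⟨k + 1, k.succ_pos, (isPeriodicPt_zero_iff hβ ht k).2 hk⟩

theorem mem_matchInterval_of_mem_nhdsGT (hβ : 0 < β) (ht : t ∈ Ioo 0 (2 - β))
    (hM : HasMatching β t) (hC : matchInterval β α ∈ 𝓝[>] t) : t ∈ matchInterval β α := by
  rcases mem_or_isPeriodicPt_of_mem_nhdsGT hβ ht hC with h | ⟨p, hp, h₁, ⟨k, h₀⟩, hne⟩
  · exact h
  obtain ⟨m, rfl⟩ := Nat.exists_eq_add_one_of_ne_zero hp.ne'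
  replace h₀ := isPeriodicPt_of_mem_periodicPts_of_isPeriodicPt_iterate
    (zero_mem_periodicPts_of_hasMatching hβ ht hM ⟨_, hp, h₁⟩) h₀
  exact absurd (((isPeriodicPt_zero_iff hβ ht m).1 h₀).trans
    ((isPeriodicPt_one_iff hβ (Ioo_subset_Ico_self ht) m).1 h₁).symm) (hne m m.lt_succ_self)

end OneSided

section Reflection

variable {β α t x : ℝ}

theorem reflect_mem_Ioo (h : α ∈ Ioo 0 (2 - β)) : 2 - β - α ∈ Ioo 0 (2 - β) :=
  ⟨by linarith [h.2], by linarith [h.1]⟩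

theorem Tneg_reflect (hβ : 0 < β) (hα : α ∈ Ioo 0 (2 - β)) (hx : x ∈ Ico 0 1) :
    Tneg β (2 - β - α) (1 - x) = 1 - Tpos β α x := by
  rw [Tpos_eq hβ (Ioo_subset_Icc_self hα) hx,
    Tneg_eq hβ (Ioo_subset_Ico_self (reflect_mem_Ioo hα)) ⟨by linarith [hx.2], by linarith [hx.1]⟩]
  split_ifs <;> linarith

theorem orbitOne_reflect (hβ : 0 < β) (hα : α ∈ Ioo 0 (2 - β)) (m : ℕ) :
    orbitOne β (2 - β - α) m = 1 - orbitZero β α m := by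
  induction m with
  | zero => simp
  | succ m ih => rw [orbitOne_add_one, ih, Tneg_reflect hβ hα (orbitZero_mem m), orbitZero_add_one]

theorem orbitZero_reflect (hβ : 0 < β) (hα : α ∈ Ioo 0 (2 - β)) (m : ℕ) :
    orbitZero β (2 - β - α) m = 1 - orbitOne β α m := by
  have := orbitOne_reflect hβ (reflect_mem_Ioo hα) m
  rw [sub_sub_cancel] at this
  linarith

theorem kPlus_reflect (hβ : 0 < β) (hα : α ∈ Ioo 0 (2 - β)) (i : ℕ) :
    kPlus β (2 - β - α) i = !kMinus β α i := by
  cases i with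
  | zero => simp
  | succ m =>
    rw [kPlus_succ hβ, kMinus_succ hβ, orbitZero_reflect hβ hα]
    split_ifs <;> simp <;> linarith

theorem kMinus_reflect (hβ : 0 < β) (hα : α ∈ Ioo 0 (2 - β)) (i : ℕ) :
    kMinus β (2 - β - α) i = !kPlus β α i := by
  cases i with
  | zero => simp
  | succ m =>
    rw [kPlus_succ hβ, kMinus_succ hβ, orbitOne_reflect hβ hα]
    split_ifs <;> simp <;> linarith

theorem orbitZero_eq_orbitOne_reflect (hβ : 0 < β) (hα : α ∈ Ioo 0 (2 - β)) (m : ℕ) :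
    orbitZero β (2 - β - α) m = orbitOne β (2 - β - α) m ↔ orbitZero β α m = orbitOne β α m := by
  rw [orbitZero_reflect hβ hα, orbitOne_reflect hβ hα, sub_right_inj, eq_comm]

theorem hasMatching_reflect (hβ : 0 < β) (hα : α ∈ Ioo 0 (2 - β)) :
    HasMatching β (2 - β - α) ↔ HasMatching β α :=
  exists_congr (orbitZero_eq_orbitOne_reflect hβ hα)

theorem matchingTime_reflect (hβ : 0 < β) (hα : α ∈ Ioo 0 (2 - β)) :
    matchingTime β (2 - β - α) = matchingTime β α :=
  congrArg sInf (Set.ext (orbitZero_eq_orbitOne_reflect hβ hα))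

theorem sameMatching_reflect (hβ : 0 < β) (hα : α ∈ Ioo 0 (2 - β)) (hx : x ∈ Ioo 0 (2 - β)) :
    SameMatching β (2 - β - α) (2 - β - x) ↔ SameMatching β α x := by
  simp only [SameMatching, hasMatching_reflect hβ hα, hasMatching_reflect hβ hx,
    matchingTime_reflect hβ hα, matchingTime_reflect hβ hx, kPlus_reflect hβ hα,
    kPlus_reflect hβ hx, kMinus_reflect hβ hα, kMinus_reflect hβ hx, Bool.not_inj_iff]
  exact and_congr_right' (and_congr_right' (and_congr_right' (forall₂_congr fun _ _ => and_comm)))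

theorem reflect_mem_matchInterval_iff (hβ : 0 < β) (hα : α ∈ Ioo 0 (2 - β)) :
    2 - β - x ∈ matchInterval β (2 - β - α) ↔ x ∈ matchInterval β α := by
  constructor
  · rintro ⟨hx, h⟩
    have hx' : x ∈ Ioo 0 (2 - β) := by simpa using reflect_mem_Ioo hx
    exact ⟨hx', (sameMatching_reflect hβ hα hx').1 h⟩
  · rintro ⟨hx, h⟩
    exact ⟨reflect_mem_Ioo hx, (sameMatching_reflect hβ hα hx).2 h⟩

theorem matchInterval_reflect_mem_nhdsGT (hβ : 0 < β) (hα : α ∈ Ioo 0 (2 - β))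
    (hC : matchInterval β α ∈ 𝓝[<] t) : matchInterval β (2 - β - α) ∈ 𝓝[>] (2 - β - t) := by
  obtain ⟨l, hl, hls⟩ := mem_nhdsLT_iff_exists_Ioo_subset.1 hC
  refine mem_of_superset (Ioo_mem_nhdsGT (by linarith [mem_Iio.1 hl] : 2 - β - t < 2 - β - l))
    fun x hx => ?_
  rw [← sub_sub_cancel (2 - β) x, reflect_mem_matchInterval_iff hβ hα]
  exact hls ⟨by linarith [hx.2], by linarith [hx.1]⟩

theorem mem_or_isPeriodicPt_of_mem_nhdsLT (hβ : 0 < β) (ht : t ∈ Ioo 0 (2 - β))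
    (hC : matchInterval β α ∈ 𝓝[<] t) :
    t ∈ matchInterval β α ∨ ∃ p > 0, IsPeriodicPt (Tpos β t) p 0 ∧
      (∃ k, IsPeriodicPt (Tneg β t) p (orbitOne β t k)) ∧
      ∀ m < p, orbitZero β t m ≠ orbitOne β t m := by
  obtain ⟨α', hα'⟩ := Filter.nonempty_of_mem hC
  rw [matchInterval_eq_of_mem hα'] at hC ⊢
  rcases mem_or_isPeriodicPt_of_mem_nhdsGT hβ (reflect_mem_Ioo ht)
    (matchInterval_reflect_mem_nhdsGT hβ hα'.1 hC) with h | ⟨p, hp, h₁, ⟨k, h₀⟩, hne⟩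
  · exact .inl ((reflect_mem_matchInterval_iff hβ hα'.1).1 h)
  refine .inr ⟨p, hp, ?_, ⟨k, ?_⟩, fun m hm h => hne m hm ?_⟩
  · have : orbitOne β (2 - β - t) p = 1 := h₁
    change orbitZero β t p = 0
    linarith [orbitOne_reflect hβ ht p]
  · rw [isPeriodicPt_orbitZero_iff, orbitZero_reflect hβ ht, orbitZero_reflect hβ ht,
      sub_right_inj] at h₀
    exact isPeriodicPt_orbitOne_iff.2 h₀
  · rw [orbitZero_reflect hβ ht, orbitOne_reflect hβ ht, h]

theorem mem_matchInterval_of_mem_nhdsLT (hβ : 0 < β) (ht : t ∈ Ioo 0 (2 - β))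
    (hM : HasMatching β t) (hC : matchInterval β α ∈ 𝓝[<] t) : t ∈ matchInterval β α := by
  obtain ⟨α', hα'⟩ := Filter.nonempty_of_mem hC
  rw [matchInterval_eq_of_mem hα'] at hC ⊢
  exact (reflect_mem_matchInterval_iff hβ hα'.1).1 <| mem_matchInterval_of_mem_nhdsGT hβ
    (reflect_mem_Ioo ht) ((hasMatching_reflect hβ ht).2 hM)
    (matchInterval_reflect_mem_nhdsGT hβ hα'.1 hC)

end Reflection

section Closure

variable {β α α₁ α₂ t : ℝ}

theorem mem_matchInterval_of_mem_closure (hβ : 0 < β) (ht : t ∈ Ioo 0 (2 - β))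
    (hM : HasMatching β t) (h : t ∈ closure (matchInterval β α)) : t ∈ matchInterval β α := by
  rcases (matchInterval_ordConnected hβ).mem_or_mem_nhdsLT_or_mem_nhdsGT h with h | h | h
  exacts [h, mem_matchInterval_of_mem_nhdsLT hβ ht hM h, mem_matchInterval_of_mem_nhdsGT hβ ht hM h]

theorem mem_Ioo_and_hasMatching_of_mem_nhdsLT_of_mem_nhdsGT (hβ : 0 < β)
    (h₁ : matchInterval β α₁ ∈ 𝓝[<] t)
    (h₂ : matchInterval β α₂ ∈ 𝓝[>] t) : t ∈ Ioo 0 (2 - β) ∧ HasMatching β t := by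
  obtain ⟨x, hx, hxt⟩ := Filter.nonempty_of_mem (inter_mem h₁ self_mem_nhdsWithin)
  obtain ⟨y, hy, hty⟩ := Filter.nonempty_of_mem (inter_mem h₂ self_mem_nhdsWithin)
  have ht : t ∈ Ioo 0 (2 - β) := ⟨hx.1.1.trans hxt, hty.trans hy.1.2⟩
  refine ⟨ht, ?_⟩
  rcases mem_or_isPeriodicPt_of_mem_nhdsLT hβ ht h₁ with h | ⟨q, hq, hq₀, ⟨k, hq₁⟩, -⟩
  · exact hasMatching_of_mem h
  rcases mem_or_isPeriodicPt_of_mem_nhdsGT hβ ht h₂ with h | ⟨p, hp, hp₁, ⟨l, hp₀⟩, -⟩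
  · exact hasMatching_of_mem h
  replace hp₀ := isPeriodicPt_of_mem_periodicPts_of_isPeriodicPt_iterate ⟨q, hq, hq₀⟩ hp₀
  replace hq₁ := isPeriodicPt_of_mem_periodicPts_of_isPeriodicPt_iterate ⟨p, hp, hp₁⟩ hq₁
  obtain ⟨m, hm⟩ := Nat.exists_eq_add_one_of_ne_zero (Nat.gcd_pos_of_pos_left q hp).ne'
  exact ⟨m, ((isPeriodicPt_zero_iff hβ ht m).1 (hm ▸ hp₀.gcd hq₀)).trans
    ((isPeriodicPt_one_iff hβ (Ioo_subset_Ico_self ht) m).1 (hm ▸ hp₁.gcd hq₁)).symm⟩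

end Closure

theorem closures_matchIntervals_disjoint_general (β α₁ α₂ : ℝ)
    (hβ : β ∈ Set.Ioo (1 : ℝ) 2)
    (hne : matchInterval β α₁ ≠ matchInterval β α₂) :
    closure (matchInterval β α₁) ∩ closure (matchInterval β α₂) = ∅ := by
  have hβ₀ : 0 < β := one_pos.trans hβ.1
  refine eq_empty_of_forall_notMem fun t ⟨h₁, h₂⟩ => hne ?_
  have key : (t ∈ Ioo 0 (2 - β) ∧ HasMatching β t) ∨
      (matchInterval β α₁ ∩ matchInterval β α₂).Nonempty := by
    rcases (matchInterval_ordConnected hβ₀).mem_or_mem_nhdsLT_or_mem_nhdsGT h₁ with h₁ | h₁ | h₁ <;>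
    rcases (matchInterval_ordConnected hβ₀).mem_or_mem_nhdsLT_or_mem_nhdsGT h₂ with h₂ | h₂ | h₂ <;>
    first
      | exact .inl ⟨h₁.1, hasMatching_of_mem h₁⟩
      | exact .inl ⟨h₂.1, hasMatching_of_mem h₂⟩
      | exact .inr (Filter.nonempty_of_mem (inter_mem h₁ h₂))
      | exact .inl (mem_Ioo_and_hasMatching_of_mem_nhdsLT_of_mem_nhdsGT hβ₀ h₁ h₂)
      | exact .inl (mem_Ioo_and_hasMatching_of_mem_nhdsLT_of_mem_nhdsGT hβ₀ h₂ h₁)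
  rcases key with ⟨ht, hM⟩ | ⟨x, hx₁, hx₂⟩
  · exact matchInterval_eq_of_mem_of_mem (mem_matchInterval_of_mem_closure hβ₀ ht hM h₁)
      (mem_matchInterval_of_mem_closure hβ₀ ht hM h₂)
  · exact matchInterval_eq_of_mem_of_mem hx₁ hx₂

theorem closures_matchIntervals_disjoint (β α₁ α₂ : ℝ)
    (hβ : β ∈ Set.Ioo (1 : ℝ) 2)
    (hα₁ : α₁ ∈ Set.Ioo (0 : ℝ) (2 - β)) (hα₂ : α₂ ∈ Set.Ioo (0 : ℝ) (2 - β))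
    (hM₁ : HasMatching β α₁) (hM₂ : HasMatching β α₂)
    (hne : matchInterval β α₁ ≠ matchInterval β α₂) :
    closure (matchInterval β α₁) ∩ closure (matchInterval β α₂) = ∅ :=
  closures_matchIntervals_disjoint_general β α₁ α₂ hβ hne
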